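/- arXiv:2102.10876 — 2 statements merged into one kernel-verified Lean document; each statement's English description precedes it below -/
import Mathlib

section
/- Let n ≥ 5, let G = D_{2n} = ⟨a, b | a^n = b^2 = 1, bab = a^{-1}⟩, and suppose i, j, k, ℓ, m are integers satisfying: 1 < i, j, k < n with i, j, k pairwise coprime; gcd(i,n) > 1, gcd(j,n) > 1 and gcd(k,n) > 1; ℓ^2 ≡ m^2 ≡ 1 (mod n); ℓ, m and ℓm are all ≢ 1 (mod n); k ≡ jℓ + i ≡ im + j (mod n); and i(ℓ+1) ≡ j(m+1) ≡ 0 (mod n). Set C = {b, ba^i, ba^j, ba^k}. Then |C| = 4, C is a transitive inverse-closed generating set of G, if n is even then n/2 ∉ {i, j, k}, and Aut(G;C) = ⟨τ_ℓφ^i, τ_mφ^j⟩ is isomorphic to Z_2 × Z_2. -/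
namespace NETCayley

variable {G : Type*} [Group G]

/-- `Aut(G;C)`: the subgroup of `MulAut G` consisting of automorphisms `σ` with `C^σ = C`. -/
def autSub (C : Set G) : Subgroup (MulAut G) where
  carrier := {σ : MulAut G | ⇑σ '' C = C}
  one_mem' := by simp
  mul_mem' := by
    intro a b ha hb
    rw [Set.mem_setOf_eq] at ha hb ⊢
    have h : ⇑(a * b) = ⇑a ∘ ⇑b := rfl
    rw [h, Set.image_comp, hb, ha]
  inv_mem' := by
    intro a ha
    rw [Set.mem_setOf_eq] at ha ⊢
    conv_lhs => rw [← ha]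
    rw [← Set.image_comp]
    have h : ⇑a⁻¹ ∘ ⇑a = id := by funext x; simp
    rw [h, Set.image_id]

/-- `A(G;C)`: proper normal `Aut(G;C)`-invariant subgroups of `G`. -/
def setA (C : Set G) : Set (Subgroup G) :=
  {N | N.Normal ∧ N ≠ ⊤ ∧ ∀ σ ∈ autSub C, N.map (σ : MulAut G).toMonoidHom = N}

/-- `A_max(G;C)`: maximal (by inclusion) elements of `A(G;C)`. -/
def setAmax (C : Set G) : Set (Subgroup G) :=
  {N | N ∈ setA C ∧ ∀ M ∈ setA C, N ≤ M → N = M}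

/-- `Φ(G;C)`: the intersection of all members of `A_max(G;C)`. -/
def PhiC (C : Set G) : Subgroup G := sInf (setAmax C)

/-- `X` is normal `C`-closed: `(x^g)^σ ∈ X` for all `x ∈ X`, `g ∈ G`, `σ ∈ Aut(G;C)`. -/
def NormalCClosed (C X : Set G) : Prop :=
  ∀ x ∈ X, ∀ g : G, ∀ σ ∈ autSub C, σ (g⁻¹ * x * g) ∈ X

/-- The normal `C`-closure of `X`: `{(x^g)^σ : x ∈ X, g ∈ G, σ ∈ Aut(G;C)}`. -/
def normalCClosure (C X : Set G) : Set G :=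
  {y | ∃ x ∈ X, ∃ g : G, ∃ σ ∈ autSub C, σ (g⁻¹ * x * g) = y}

/-- The orbit of `c` under the natural action of `Aut(G;C)`. -/
def orbitC (C : Set G) (c : G) : Set G := {y | ∃ σ ∈ autSub C, σ c = y}

/-- `C` is a transitive set: either `Aut(G;C)` is transitive on `C`, or there are exactly two
orbits `C₊`, `C₋` on `C` with `C = C₊ ∪ C₋` and `C₋ = C₊⁻¹`. -/
def TransSet (C : Set G) : Prop :=
  (∀ c ∈ C, ∀ c' ∈ C, ∃ σ ∈ autSub C, σ c = c') ∨
  (∃ cp ∈ C, ∃ cm ∈ C, orbitC C cp ≠ orbitC C cm ∧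
    C = orbitC C cp ∪ orbitC C cm ∧ orbitC C cm = (orbitC C cp)⁻¹)

/-- A transitive inverse-closed generating set of `G`. -/
def IsTransGenSet (C : Set G) : Prop :=
  (1 : G) ∉ C ∧ (∀ c ∈ C, c⁻¹ ∈ C) ∧ Subgroup.closure C = ⊤ ∧ TransSet C

/-- The map underlying the automorphism `τ_k φ^m` of the dihedral group:
`a^i ↦ a^{ki}`, `b a^i ↦ b a^{ki+m}`. -/
def dihMap (n : ℕ) (k m : ZMod n) : DihedralGroup n → DihedralGroup n
  | .r i => .r (k * i)
  | .sr i => .sr (k * i + m)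

/-- The automorphism `τ_k φ^m` of the dihedral group (for `k` a unit mod `n`). -/
def dihAut (n : ℕ) (k : (ZMod n)ˣ) (m : ZMod n) : MulAut (DihedralGroup n) where
  toFun := dihMap n (k : ZMod n) m
  invFun := dihMap n ((k⁻¹ : (ZMod n)ˣ) : ZMod n) (-(((k⁻¹ : (ZMod n)ˣ) : ZMod n) * m))
  left_inv := by
    have hk : ((k⁻¹ : (ZMod n)ˣ) : ZMod n) * ((k : (ZMod n)ˣ) : ZMod n) = 1 := k.inv_mul
    rintro (i | i) <;> simp only [dihMap] <;> congr 1 <;> linear_combination (i : ZMod n) * hk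
  right_inv := by
    have hk : ((k : (ZMod n)ˣ) : ZMod n) * ((k⁻¹ : (ZMod n)ˣ) : ZMod n) = 1 := k.mul_inv
    rintro (i | i) <;> simp only [dihMap] <;> congr 1
    · linear_combination (i : ZMod n) * hk
    · linear_combination ((i : ZMod n) - m) * hk
  map_mul' := by
    rintro (i | i) (j | j) <;>
      simp only [DihedralGroup.r_mul_r, DihedralGroup.r_mul_sr, DihedralGroup.sr_mul_r,
        DihedralGroup.sr_mul_sr, dihMap] <;> congr 1 <;> ring

/-!
Every automorphism of `D_{2n}` (`n ≥ 3`) is some `τ_u φ^c`, acting on reflections by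
`ba^x ↦ ba^(ux+c)`. The congruences make `A = τ_ℓ φ^i` and `B = τ_m φ^j` commuting involutions
acting on `C` as `(b ba^i)(ba^j ba^k)` and `(b ba^j)(ba^i ba^k)`, so `⟨A, B⟩ ≤ Aut(G;C)` is
transitive on `C`. An element of `Aut(G;C)` fixing `b` is some `τ_u`; as `gcd(i, n) > 1` divides
`ui` but neither `j` nor `k`, it fixes `ba^i`, likewise `ba^j`, and then `u = 1` because
`gcd(i, j) = 1`. Hence `Aut(G;C)` acts regularly on `C` by involutions: it is `⟨A, B⟩`, a Klein
four-group. Coprimality of `i` and `j` also gives `⟨b · ba^i, b · ba^j⟩ = ⟨a⟩`, so `C` generates,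
and `n = 2i` would force both `j` and `k` to be even.
-/

open DihedralGroup

section DihedralAutomorphisms

variable {n : ℕ}

@[simp] lemma dihAut_r (u : (ZMod n)ˣ) (c x : ZMod n) :
    dihAut n u c (r x) = r ((u : ZMod n) * x) := rfl

@[simp] lemma dihAut_sr (u : (ZMod n)ˣ) (c x : ZMod n) :
    dihAut n u c (sr x) = sr ((u : ZMod n) * x + c) := rfl

lemma dihAut_mul (u v : (ZMod n)ˣ) (c d : ZMod n) :
    dihAut n u c * dihAut n v d = dihAut n (u * v) (u * d + c) := by
  ext (x | x) <;> simp only [MulAut.mul_apply, dihAut_r, dihAut_sr, Units.val_mul] <;> ring_nf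

lemma dihAut_one_zero : dihAut n 1 0 = 1 := by
  ext (x | x) <;> simp

lemma dihAut_mul_self_eq_one {u : (ZMod n)ˣ} {c : ZMod n} (hu : (u : ZMod n) ^ 2 = 1)
    (hc : c * (u + 1) = 0) : dihAut n u c * dihAut n u c = 1 := by
  rw [dihAut_mul, ← dihAut_one_zero]
  congr 1
  · exact Units.ext (by rw [Units.val_mul, ← sq, hu, Units.val_one])
  · linear_combination hc

lemma exists_map_r_eq_r_mul (hn : 3 ≤ n) (σ : MulAut (DihedralGroup n)) :
    ∃ u : ZMod n, ∀ x, σ (r x) = r (u * x) := by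
  have : NeZero n := ⟨by omega⟩
  obtain ⟨u, hu⟩ : ∃ u, σ (r 1) = r u := by
    rcases h : σ (r 1) with u | u
    · exact ⟨u, rfl⟩
    · have := MulEquiv.orderOf_eq σ (r 1)
      rw [h, orderOf_sr, orderOf_r_one] at this
      omega
  refine ⟨u, fun x => ?_⟩
  rw [← ZMod.natCast_zmod_val x, ← r_one_pow, map_pow, hu, r_pow]

lemma exists_eq_dihAut (hn : 3 ≤ n) (σ : MulAut (DihedralGroup n)) :
    ∃ (u : (ZMod n)ˣ) (c : ZMod n), σ = dihAut n u c := by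
  obtain ⟨u, hu⟩ := exists_map_r_eq_r_mul hn σ
  obtain ⟨v, hv⟩ := exists_map_r_eq_r_mul hn σ⁻¹
  have huv : u * v = 1 := by
    have := MulAut.apply_inv_self _ σ (r 1)
    rw [hv, hu, mul_one] at this
    exact r.inj this
  obtain ⟨c, hc⟩ : ∃ c, σ (sr 0) = sr c := by
    rcases h : σ (sr 0) with c | c
    · have := MulAut.inv_apply_self _ σ (sr 0)
      rw [h, hv] at this
      exact absurd this (by simp)
    · exact ⟨c, rfl⟩
  refine ⟨Units.mkOfMulEqOne u v huv, c, ?_⟩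
  ext (x | x)
  · simp [hu]
  · rw [← zero_add x, ← sr_mul_r, map_mul, hc, hu]
    simp [add_comm]

lemma closure_sr_eq_top {x y : ZMod n} (hxy : IsCoprime x y) :
    Subgroup.closure {sr 0, sr x, sr y} = ⊤ := by
  set H := Subgroup.closure ({sr 0, sr x, sr y} : Set (DihedralGroup n))
  have h0 : sr 0 ∈ H := Subgroup.subset_closure (by simp)
  have hrx : r x ∈ H := by simpa using mul_mem h0 (Subgroup.subset_closure (by simp) : sr x ∈ H)
  have hry : r y ∈ H := by simpa using mul_mem h0 (Subgroup.subset_closure (by simp) : sr y ∈ H)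
  obtain ⟨a, b, hab⟩ := hxy
  have h1 : r 1 ∈ H := by
    have := mul_mem (zpow_mem hrx a.cast) (zpow_mem hry b.cast)
    rwa [r_zpow, r_zpow, r_mul_r, ZMod.intCast_zmod_cast, ZMod.intCast_zmod_cast, mul_comm x,
      mul_comm y, hab] at this
  have hr : ∀ x, r x ∈ H := fun x => by
    rw [← ZMod.intCast_zmod_cast x, ← r_one_zpow]
    exact zpow_mem h1 _
  refine eq_top_iff.mpr fun g _ => ?_
  rcases g with x | x
  · exact hr x
  · simpa using mul_mem h0 (hr x)

end DihedralAutomorphisms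

section RegularAction

variable {G : Type*} [Group G] {C : Set G} {x₀ : G}

lemma mem_autSub_of_mul_self_eq_one {σ : MulAut G} (hσ : σ * σ = 1) {a b c d : G}
    (hab : σ a = b) (hcd : σ c = d) : σ ∈ autSub {a, b, c, d} := by
  have hba : σ b = a := by rw [← hab, ← MulAut.mul_apply, hσ, MulAut.one_apply]
  have hdc : σ d = c := by rw [← hcd, ← MulAut.mul_apply, hσ, MulAut.one_apply]
  change ⇑σ '' {a, b, c, d} = {a, b, c, d}
  rw [Set.image_insert_eq, Set.image_insert_eq, Set.image_insert_eq, Set.image_singleton, hab,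
    hba, hcd, hdc, Set.insert_comm b a, Set.pair_comm d c]

lemma eq_of_apply_eq_of_stabilizer_trivial (hfix : ∀ σ ∈ autSub C, σ x₀ = x₀ → σ = 1)
    {σ τ : MulAut G} (hσ : σ ∈ autSub C) (hτ : τ ∈ autSub C) (h : σ x₀ = τ x₀) : σ = τ :=
  (inv_mul_eq_one.mp <| hfix (τ⁻¹ * σ) (mul_mem (inv_mem hτ) hσ) <| by
    rw [MulAut.mul_apply, h, MulAut.inv_apply_self]).symm

lemma apply_mem_of_mem_autSub {σ : MulAut G} (hσ : σ ∈ autSub C) {c : G} (hc : c ∈ C) :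
    σ c ∈ C :=
  (hσ : ⇑σ '' C = C) ▸ Set.mem_image_of_mem σ hc

variable {H : Subgroup (MulAut G)}

lemma transSet_of_swaps (hH : H ≤ autSub C)
    (hswap : ∀ c ∈ C, ∃ σ ∈ H, σ x₀ = c ∧ σ c = x₀) : TransSet C := by
  refine Or.inl fun c hc c' hc' => ?_
  obtain ⟨σ, hσ, -, hσc⟩ := hswap c hc
  obtain ⟨τ, hτ, hτ₀, -⟩ := hswap c' hc'
  exact ⟨τ * σ, hH (mul_mem hτ hσ), by rw [MulAut.mul_apply, hσc, hτ₀]⟩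

lemma autSub_eq_of_swaps (hx₀ : x₀ ∈ C) (hfix : ∀ σ ∈ autSub C, σ x₀ = x₀ → σ = 1)
    (hH : H ≤ autSub C) (hswap : ∀ c ∈ C, ∃ σ ∈ H, σ x₀ = c ∧ σ c = x₀) : autSub C = H := by
  refine le_antisymm (fun σ hσ => ?_) hH
  obtain ⟨τ, hτ, hτ₀, -⟩ := hswap (σ x₀) (apply_mem_of_mem_autSub hσ hx₀)
  rwa [eq_of_apply_eq_of_stabilizer_trivial hfix hσ (hH hτ) hτ₀.symm]

lemma mul_self_eq_one_of_swaps (hx₀ : x₀ ∈ C) (hfix : ∀ σ ∈ autSub C, σ x₀ = x₀ → σ = 1)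
    (hH : H ≤ autSub C) (hswap : ∀ c ∈ C, ∃ σ ∈ H, σ x₀ = c ∧ σ c = x₀) {σ : MulAut G}
    (hσ : σ ∈ autSub C) : σ * σ = 1 := by
  obtain ⟨τ, hτ, hτ₀, hτσ⟩ := hswap (σ x₀) (apply_mem_of_mem_autSub hσ hx₀)
  obtain rfl := eq_of_apply_eq_of_stabilizer_trivial hfix hσ (hH hτ) hτ₀.symm
  exact hfix _ (mul_mem hσ hσ) hτσ

lemma card_autSub_eq_ncard (hx₀ : x₀ ∈ C) (hfix : ∀ σ ∈ autSub C, σ x₀ = x₀ → σ = 1)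
    (hH : H ≤ autSub C) (hswap : ∀ c ∈ C, ∃ σ ∈ H, σ x₀ = c ∧ σ c = x₀) :
    Nat.card (autSub C) = C.ncard := by
  rw [← Nat.card_coe_set_eq]
  refine Nat.card_eq_of_bijective (fun σ => ⟨σ.1 x₀, apply_mem_of_mem_autSub σ.2 hx₀⟩) ⟨?_, ?_⟩
  · rintro ⟨σ, hσ⟩ ⟨τ, hτ⟩ h
    exact Subtype.ext (eq_of_apply_eq_of_stabilizer_trivial hfix hσ hτ (congrArg Subtype.val h))
  · rintro ⟨c, hc⟩
    obtain ⟨σ, hσ, hσ₀, -⟩ := hswap c hc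
    exact ⟨⟨σ, hH hσ⟩, Subtype.ext hσ₀⟩

lemma isKleinFour_autSub (hC : C.ncard = 4) (hx₀ : x₀ ∈ C)
    (hfix : ∀ σ ∈ autSub C, σ x₀ = x₀ → σ = 1)
    (hH : H ≤ autSub C) (hswap : ∀ c ∈ C, ∃ σ ∈ H, σ x₀ = c ∧ σ c = x₀) :
    IsKleinFour (autSub C) where
  card_four := (card_autSub_eq_ncard hx₀ hfix hH hswap).trans hC
  exponent_two := by
    have hcard := (card_autSub_eq_ncard hx₀ hfix hH hswap).trans hC
    have : Finite (autSub C) := Nat.finite_of_card_ne_zero (by omega)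
    have : Nontrivial (autSub C) := Finite.one_lt_card_iff_nontrivial.mp (by omega)
    rw [Monoid.exponent_eq_prime_iff Nat.prime_two]
    exact fun σ hσ => orderOf_eq_prime
      (Subtype.ext (by rw [sq]; exact mul_self_eq_one_of_swaps hx₀ hfix hH hswap σ.2)) hσ

end RegularAction

section Arithmetic

lemma eq_zero_of_isCoprime_of_mul_eq_zero {R : Type*} [CommRing R] {a b x : R}
    (hab : IsCoprime a b) (ha : a * x = 0) (hb : b * x = 0) : x = 0 := by
  obtain ⟨p, q, hpq⟩ := hab
  linear_combination p * ha + q * hb - x * hpq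

lemma natCast_ne_zero_of_lt {n a : ℕ} (h0 : 0 < a) (ha : a < n) : (a : ZMod n) ≠ 0 :=
  fun h => Nat.not_dvd_of_pos_of_lt h0 ha ((ZMod.natCast_eq_zero_iff a n).mp h)

lemma natCast_ne_natCast_of_lt {n a b : ℕ} (ha : a < n) (hb : b < n) (hab : a ≠ b) :
    (a : ZMod n) ≠ b := fun h =>
  hab (by simpa [ZMod.val_cast_of_lt ha, ZMod.val_cast_of_lt hb] using congrArg ZMod.val h)

lemma natCast_ne_mul_natCast {n x y : ℕ} (hx : 1 < x.gcd n) (hxy : x.Coprime y) (u : ZMod n) :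
    (y : ZMod n) ≠ u * x := by
  intro h
  have hd := congrArg (ZMod.castHom (Nat.gcd_dvd_right x n) (ZMod (x.gcd n))) h
  rw [map_mul, map_natCast, map_natCast,
    (ZMod.natCast_eq_zero_iff x _).mpr (Nat.gcd_dvd_left x n), mul_zero,
    ZMod.natCast_eq_zero_iff] at hd
  exact hx.ne' (Nat.dvd_one.mp (hxy ▸ Nat.dvd_gcd (Nat.gcd_dvd_left x n) hd))

lemma ne_of_one_lt_of_coprime {x y : ℕ} (hx : 1 < x) (hxy : x.Coprime y) : x ≠ y :=
  fun h => hx.ne' ((Nat.coprime_self x).mp (h ▸ hxy))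

lemma two_dvd_of_one_lt_gcd {n x y : ℕ} (hn : n = 2 * x) (hxy : x.Coprime y)
    (hy : 1 < y.gcd n) : 2 ∣ y := by
  have hd2 : y.gcd n ∣ 2 :=
    ((Nat.Coprime.coprime_dvd_left (Nat.gcd_dvd_left y n) hxy.symm).dvd_of_dvd_mul_right
      (hn ▸ Nat.gcd_dvd_right y n))
  have := Nat.le_of_dvd two_pos hd2
  exact (show y.gcd n = 2 by omega) ▸ Nat.gcd_dvd_left y n

lemma ne_half_of_coprime {n x y z : ℕ} (hn : 2 ∣ n) (hy : 1 < y.gcd n) (hz : 1 < z.gcd n)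
    (hxy : x.Coprime y) (hxz : x.Coprime z) (hyz : y.Coprime z) : x ≠ n / 2 := by
  rintro rfl
  have hn' : n = 2 * (n / 2) := (Nat.mul_div_cancel' hn).symm
  have := Nat.dvd_gcd (two_dvd_of_one_lt_gcd hn' hxy hy) (two_dvd_of_one_lt_gcd hn' hxz hz)
  rw [hyz] at this
  omega

end Arithmetic

section Family

variable {n : ℕ}

lemma ncard_sr_natCast_eq_four {i j k : ℕ} (hi : 0 < i) (hj : 0 < j) (hk : 0 < k) (hin : i < n)
    (hjn : j < n) (hkn : k < n) (hij : i ≠ j) (hik : i ≠ k) (hjk : j ≠ k) :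
    ({sr 0, sr (i : ZMod n), sr (j : ZMod n), sr (k : ZMod n)} : Set (DihedralGroup n)).ncard
      = 4 := by
  refine Set.ncard_eq_four.mpr ⟨_, _, _, _, ?_, ?_, ?_, ?_, ?_, ?_, rfl⟩ <;>
    simp only [ne_eq, sr.injEq]
  exacts [(natCast_ne_zero_of_lt hi hin).symm, (natCast_ne_zero_of_lt hj hjn).symm,
    (natCast_ne_zero_of_lt hk hkn).symm, natCast_ne_natCast_of_lt hin hjn hij,
    natCast_ne_natCast_of_lt hin hkn hik, natCast_ne_natCast_of_lt hjn hkn hjk]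

lemma units_mul_natCast_eq_self {x y z : ℕ} {u : (ZMod n)ˣ} (hx : (x : ZMod n) ≠ 0)
    (hgx : 1 < x.gcd n) (hxy : x.Coprime y) (hxz : x.Coprime z)
    (h : sr ((u : ZMod n) * (x : ZMod n)) ∈
      ({sr 0, sr (x : ZMod n), sr (y : ZMod n), sr (z : ZMod n)} : Set (DihedralGroup n))) :
    (u : ZMod n) * (x : ZMod n) = x := by
  simp only [Set.mem_insert_iff, Set.mem_singleton_iff, sr.injEq] at h
  rcases h with h | h | h | h
  · exact absurd ((Units.mul_right_eq_zero u).mp h) hx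
  · exact h
  · exact absurd h.symm (natCast_ne_mul_natCast hgx hxy _)
  · exact absurd h.symm (natCast_ne_mul_natCast hgx hxz _)

lemma eq_one_of_mem_autSub_of_apply_sr_zero {i j k : ℕ} (hn : 3 ≤ n) (hi : (i : ZMod n) ≠ 0)
    (hj : (j : ZMod n) ≠ 0) (hij : i.Coprime j) (hik : i.Coprime k) (hjk : j.Coprime k)
    (hgi : 1 < i.gcd n) (hgj : 1 < j.gcd n) :
    ∀ σ ∈ autSub ({sr 0, sr (i : ZMod n), sr (j : ZMod n), sr (k : ZMod n)} :
      Set (DihedralGroup n)), σ (sr 0) = sr 0 → σ = 1 := by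
  intro σ hσ h0
  obtain ⟨u, c, rfl⟩ := exists_eq_dihAut hn σ
  obtain rfl : c = 0 := by simpa using h0
  have hui := units_mul_natCast_eq_self hi hgi hij hik
    (by simpa using apply_mem_of_mem_autSub hσ (c := sr (i : ZMod n)) (by simp))
  have huj := units_mul_natCast_eq_self hj hgj hij.symm hjk
    (by simpa [Set.insert_comm (sr (i : ZMod n))] using
      apply_mem_of_mem_autSub hσ (c := sr (j : ZMod n)) (by simp))
  have hu : u = 1 := Units.val_eq_one.mp <| sub_eq_zero.mp <|
    eq_zero_of_isCoprime_of_mul_eq_zero hij.cast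
      (by linear_combination hui) (by linear_combination huj)
  rw [hu, dihAut_one_zero]

variable {x y z : ZMod n} {u v : (ZMod n)ˣ}

lemma closure_dihAut_le_autSub (hu : (u : ZMod n) ^ 2 = 1) (hv : (v : ZMod n) ^ 2 = 1)
    (hxu : x * (u + 1) = 0) (hyv : y * (v + 1) = 0) (hzu : z = y * u + x)
    (hzv : z = x * v + y) :
    Subgroup.closure {dihAut n u x, dihAut n v y} ≤ autSub {sr 0, sr x, sr y, sr z} := by
  have hA := mem_autSub_of_mul_self_eq_one (dihAut_mul_self_eq_one hu hxu)
    (a := sr 0) (b := sr x) (c := sr y) (d := sr z) (by simp) (by simp [hzu, mul_comm])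
  have hB := mem_autSub_of_mul_self_eq_one (dihAut_mul_self_eq_one hv hyv)
    (a := sr 0) (b := sr y) (c := sr x) (d := sr z) (by simp) (by simp [hzv, mul_comm])
  rw [Set.insert_comm (sr y)] at hB
  rw [Subgroup.closure_le]
  rintro σ (rfl | rfl)
  exacts [hA, hB]

lemma exists_swap_mem_closure_dihAut (hv : (v : ZMod n) ^ 2 = 1) (hxu : x * (u + 1) = 0)
    (hyv : y * (v + 1) = 0) (hzu : z = y * u + x) (hzv : z = x * v + y) :
    ∀ c ∈ ({sr 0, sr x, sr y, sr z} : Set (DihedralGroup n)),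
      ∃ σ ∈ Subgroup.closure {dihAut n u x, dihAut n v y}, σ (sr 0) = c ∧ σ c = sr 0 := by
  have hA : dihAut n u x ∈ Subgroup.closure {dihAut n u x, dihAut n v y} :=
    Subgroup.subset_closure (by simp)
  have hB : dihAut n v y ∈ Subgroup.closure {dihAut n u x, dihAut n v y} :=
    Subgroup.subset_closure (by simp)
  simp only [Set.mem_insert_iff, Set.mem_singleton_iff]
  rintro c (rfl | rfl | rfl | rfl)
  · exact ⟨1, one_mem _, rfl, rfl⟩
  · exact ⟨_, hA, by simp, by simp; linear_combination hxu⟩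
  · exact ⟨_, hB, by simp, by simp; linear_combination hyv⟩
  · refine ⟨_, mul_mem hA hB, by simp; linear_combination -hzu, ?_⟩
    simp only [MulAut.mul_apply, dihAut_sr, sr.injEq]
    linear_combination (u * v : ZMod n) * hzv + u * x * hv + u * hyv + hxu

end Family

theorem stmt16_general (n : ℕ) (i j k : ℕ)
    (hi : 1 < i) (hin : i < n) (hj : 1 < j) (hjn : j < n) (hk : 1 < k) (hkn : k < n)
    (hij : Nat.Coprime i j) (hik : Nat.Coprime i k) (hjk : Nat.Coprime j k)
    (hgi : 1 < Nat.gcd i n) (hgj : 1 < Nat.gcd j n) (hgk : 1 < Nat.gcd k n)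
    (l m : ℤ)
    (hl2 : ((l : ZMod n)) ^ 2 = 1) (hm2 : ((m : ZMod n)) ^ 2 = 1)
    (hk1 : (k : ZMod n) = (j : ZMod n) * (l : ZMod n) + (i : ZMod n))
    (hk2 : (k : ZMod n) = (i : ZMod n) * (m : ZMod n) + (j : ZMod n))
    (hil : (i : ZMod n) * ((l : ZMod n) + 1) = 0)
    (hjm : (j : ZMod n) * ((m : ZMod n) + 1) = 0)
    (C : Set (DihedralGroup n))
    (hCdef : C = {DihedralGroup.sr 0, DihedralGroup.sr (i : ZMod n),
      DihedralGroup.sr (j : ZMod n), DihedralGroup.sr (k : ZMod n)}) :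
    C.ncard = 4 ∧ IsTransGenSet C ∧
    (n % 2 = 0 → i ≠ n / 2 ∧ j ≠ n / 2 ∧ k ≠ n / 2) ∧
    ∃ ul um : (ZMod n)ˣ, (ul : ZMod n) = (l : ZMod n) ∧ (um : ZMod n) = (m : ZMod n) ∧
      autSub C = Subgroup.closure {dihAut n ul (i : ZMod n), dihAut n um (j : ZMod n)} ∧
      Nonempty (autSub C ≃* Multiplicative (ZMod 2) × Multiplicative (ZMod 2)) := by
  have hx₀ : sr 0 ∈ C := hCdef ▸ Set.mem_insert _ _
  subst hCdef
  obtain ⟨ul, hul⟩ := IsUnit.of_pow_eq_one hl2 two_ne_zero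
  obtain ⟨um, hum⟩ := IsUnit.of_pow_eq_one hm2 two_ne_zero
  rw [← hul] at hl2 hk1 hil
  rw [← hum] at hm2 hk2 hjm
  have hC := ncard_sr_natCast_eq_four (n := n) (by omega) (by omega) (by omega) hin hjn hkn
    (ne_of_one_lt_of_coprime hi hij) (ne_of_one_lt_of_coprime hi hik)
    (ne_of_one_lt_of_coprime hj hjk)
  have hfix := eq_one_of_mem_autSub_of_apply_sr_zero (k := k) (by omega)
    (natCast_ne_zero_of_lt (by omega) hin) (natCast_ne_zero_of_lt (by omega) hjn)
    hij hik hjk hgi hgj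
  have hH := closure_dihAut_le_autSub hl2 hm2 hil hjm hk1 hk2
  have hswap := exists_swap_mem_closure_dihAut hm2 hil hjm hk1 hk2
  have := isKleinFour_autSub hC hx₀ hfix hH hswap
  refine ⟨hC, ⟨by simp [one_def, -r_zero], by simp [inv_sr], ?_, transSet_of_swaps hH hswap⟩,
    fun h2 => ?_, ul, um, hul, hum, autSub_eq_of_swaps hx₀ hfix hH hswap,
    ⟨IsKleinFour.nonempty_mulEquiv.some.trans (MulEquiv.prodMultiplicative _ _)⟩⟩
  · refine top_le_iff.mp <| (closure_sr_eq_top hij.cast).ge.trans <| Subgroup.closure_mono ?_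
    exact Set.insert_subset_insert <| Set.insert_subset_insert <|
      Set.singleton_subset_iff.mpr (Set.mem_insert _ _)
  · have h2 := Nat.dvd_of_mod_eq_zero h2
    exact ⟨ne_half_of_coprime h2 hgj hgk hij hik hjk,
      ne_half_of_coprime h2 hgi hgk hij.symm hjk hik,
      ne_half_of_coprime h2 hgi hgj hik.symm hjk.symm hij⟩

/-- The new family: under the listed coprimality and congruence
conditions, `C = {b, ba^i, ba^j, ba^k}` has size 4, is a transitive inverse-closed
generating set of `D_{2n}`, `n/2 ∉ {i,j,k}` when `n` is even, and
`Aut(G;C) = ⟨τ_ℓφ^i, τ_mφ^j⟩ ≅ Z₂ × Z₂`. -/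
theorem stmt16 (n : ℕ) (hn : 5 ≤ n) (i j k : ℕ)
    (hi : 1 < i) (hin : i < n) (hj : 1 < j) (hjn : j < n) (hk : 1 < k) (hkn : k < n)
    (hij : Nat.Coprime i j) (hik : Nat.Coprime i k) (hjk : Nat.Coprime j k)
    (hgi : 1 < Nat.gcd i n) (hgj : 1 < Nat.gcd j n) (hgk : 1 < Nat.gcd k n)
    (l m : ℤ)
    (hl2 : ((l : ZMod n)) ^ 2 = 1) (hm2 : ((m : ZMod n)) ^ 2 = 1)
    (hl1 : (l : ZMod n) ≠ 1) (hm1 : (m : ZMod n) ≠ 1)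
    (hlm1 : (l : ZMod n) * (m : ZMod n) ≠ 1)
    (hk1 : (k : ZMod n) = (j : ZMod n) * (l : ZMod n) + (i : ZMod n))
    (hk2 : (k : ZMod n) = (i : ZMod n) * (m : ZMod n) + (j : ZMod n))
    (hil : (i : ZMod n) * ((l : ZMod n) + 1) = 0)
    (hjm : (j : ZMod n) * ((m : ZMod n) + 1) = 0)
    (C : Set (DihedralGroup n))
    (hCdef : C = {DihedralGroup.sr 0, DihedralGroup.sr (i : ZMod n),
      DihedralGroup.sr (j : ZMod n), DihedralGroup.sr (k : ZMod n)}) :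
    C.ncard = 4 ∧ IsTransGenSet C ∧
    (n % 2 = 0 → i ≠ n / 2 ∧ j ≠ n / 2 ∧ k ≠ n / 2) ∧
    ∃ ul um : (ZMod n)ˣ, (ul : ZMod n) = (l : ZMod n) ∧ (um : ZMod n) = (m : ZMod n) ∧
      autSub C = Subgroup.closure {dihAut n ul (i : ZMod n), dihAut n um (j : ZMod n)} ∧
      Nonempty (autSub C ≃* Multiplicative (ZMod 2) × Multiplicative (ZMod 2)) :=
  stmt16_general n i j k hi hin hj hjn hk hkn hij hik hjk hgi hgj hgk l m hl2 hm2 hk1 hk2 hil hjm C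
    hCdef

end NETCayley
end

section
/- Let p be an odd prime that is not of the form 2^r - 1 for any positive integer r, and let q be an odd prime dividing p + 1. Set n = 2pq, i = p, j = q, k = p + q, ℓ = 2p + 1 and m = n - ℓ = 2pq - 2p - 1. Then: 1 < i, j, k < n and i, j, k are pairwise coprime; gcd(i,n) = p > 1, gcd(j,n) = q > 1 and gcd(k,n) = 2 > 1; ℓ^2 ≡ m^2 ≡ 1 (mod n); ℓ, m and ℓm are all ≢ 1 (mod n); k ≡ jℓ + i (mod n) and k ≡ im + j (mod n); and i(ℓ+1) ≡ 0 (mod n) and j(m+1) ≡ 0 (mod n). -/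
namespace NETCayley

variable {G : Type*} [Group G]

/-- For an odd non-Mersenne prime `p` and an odd prime `q` dividing `p+1`,
the parameters `n = 2pq`, `i = p`, `j = q`, `k = p+q`, `ℓ = 2p+1`, `m = n-ℓ` satisfy all the
conditions of the new construction (Example 4.7 of the paper). -/
theorem stmt18 (p q : ℕ) (hp : p.Prime) (hpodd : Odd p)
    (hpM : ∀ r : ℕ, 0 < r → p ≠ 2 ^ r - 1)
    (hq : q.Prime) (hqodd : Odd q) (hqdvd : q ∣ p + 1) :
    ∀ n i j k l m : ℕ, n = 2 * p * q → i = p → j = q → k = p + q →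
      l = 2 * p + 1 → m = n - l →
      (1 < i ∧ i < n ∧ 1 < j ∧ j < n ∧ 1 < k ∧ k < n ∧
        Nat.Coprime i j ∧ Nat.Coprime i k ∧ Nat.Coprime j k) ∧
      (Nat.gcd i n = p ∧ 1 < p ∧ Nat.gcd j n = q ∧ 1 < q ∧ Nat.gcd k n = 2 ∧ (1:ℕ) < 2) ∧
      (((l : ZMod n)) ^ 2 = 1 ∧ ((m : ZMod n)) ^ 2 = 1) ∧
      ((l : ZMod n) ≠ 1 ∧ (m : ZMod n) ≠ 1 ∧ (l : ZMod n) * (m : ZMod n) ≠ 1) ∧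
      ((k : ZMod n) = (j : ZMod n) * (l : ZMod n) + (i : ZMod n) ∧
        (k : ZMod n) = (i : ZMod n) * (m : ZMod n) + (j : ZMod n)) ∧
      ((i : ZMod n) * ((l : ZMod n) + 1) = 0 ∧ (j : ZMod n) * ((m : ZMod n) + 1) = 0) := by
  intro n i j k l m hn hi hj hk hl hm
  subst hn hk hl hm
  rcases hi.symm with rfl
  rcases hj.symm with rfl
  -- basic numeric facts
  have hp2 : p ≠ 2 := by rintro rfl; obtain ⟨c, hc⟩ := hpodd; omega
  have hq2 : q ≠ 2 := by rintro rfl; obtain ⟨c, hc⟩ := hqodd; omega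
  have hp3 : 3 ≤ p := by have := hp.two_le; omega
  have hq3 : 3 ≤ q := by have := hq.two_le; omega
  have hqp : q ≠ p := by
    rintro rfl
    have h1 : q ∣ 1 := by
      have := Nat.dvd_sub hqdvd (dvd_refl q)
      simpa using this
    have := Nat.le_of_dvd one_pos h1
    omega
  obtain ⟨t, ht⟩ := hqdvd
  have htpos : 1 ≤ t := by nlinarith
  have hcpq : Nat.Coprime p q := (Nat.coprime_primes hp hq).mpr (Ne.symm hqp)
  have hcpk : Nat.Coprime p (p + q) := by
    simpa using (Nat.coprime_add_self_left (m := p) (n := q)).mpr hcpq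
  have hcqk : Nat.Coprime q (p + q) := by
    have : Nat.Coprime q p := hcpq.symm
    simpa [Nat.add_comm] using (Nat.coprime_add_self_left (m := q) (n := p)).mpr this
  have hn3 : 3 * (p + q) ≤ 2 * p * q := by nlinarith
  have hNpos : 0 < 2 * p * q := by positivity
  haveI : NeZero (2 * p * q) := ⟨by omega⟩
  have hN0 : ((2 * p * q : ℕ) : ZMod (2 * p * q)) = 0 := ZMod.natCast_self _
  have hkey : ((2 * p * (p + 1) : ℕ) : ZMod (2 * p * q)) = 0 :=
    (ZMod.natCast_eq_zero_iff _ _).mpr ⟨t, by rw [ht]; ring⟩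
  have hle : 2 * p + 1 ≤ 2 * p * q := by nlinarith
  have hmcast : ((2 * p * q - (2 * p + 1) : ℕ) : ZMod (2 * p * q))
      = -((2 * p + 1 : ℕ) : ZMod (2 * p * q)) := by
    rw [Nat.cast_sub hle, hN0]; ring
  have hl2 : (((2 * p + 1 : ℕ)) : ZMod (2 * p * q)) ^ 2 = 1 := by
    have h : (((2 * p + 1 : ℕ)) : ZMod (2 * p * q)) ^ 2
        = 2 * ((2 * p * (p + 1) : ℕ) : ZMod (2 * p * q)) + 1 := by push_cast; ring
    rw [h, hkey]; ring
  refine ⟨⟨by omega, by nlinarith, by omega, by nlinarith, by omega, by omega, hcpq, hcpk, hcqk⟩,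
    ?_, ⟨hl2, by rw [hmcast, neg_sq]; exact hl2⟩, ⟨?_, ?_, ?_⟩, ⟨?_, ?_⟩, ?_, ?_⟩
  · -- gcds
    refine ⟨Nat.gcd_eq_left ⟨2 * q, by ring⟩, by omega,
      Nat.gcd_eq_left ⟨2 * p, by ring⟩, by omega, ?_, by norm_num⟩
    have h1 : Nat.gcd (p + q) (2 * p * q) = Nat.gcd (p + q) (2 * q) := by
      have h : 2 * p * q = p * (2 * q) := by ring
      rw [h, Nat.Coprime.gcd_mul_left_cancel_right _ hcpk]
    have h2 : Nat.gcd (p + q) (2 * q) = Nat.gcd (p + q) 2 := by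
      have h : 2 * q = q * 2 := by ring
      rw [h, Nat.Coprime.gcd_mul_left_cancel_right _ hcqk]
    have h3 : (2 : ℕ) ∣ p + q := by
      obtain ⟨a, ha⟩ := hpodd; obtain ⟨b, hb⟩ := hqodd; exact ⟨a + b + 1, by omega⟩
    rw [h1, h2, Nat.gcd_eq_right h3]
  · intro h
    have h0 : ((2 * p : ℕ) : ZMod (2 * p * q)) = 0 := by
      push_cast at h ⊢; linear_combination h
    have := Nat.le_of_dvd (by omega) ((ZMod.natCast_eq_zero_iff _ _).mp h0)
    nlinarith
  · intro h
    rw [hmcast] at h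
    have h0 : ((2 * p + 2 : ℕ) : ZMod (2 * p * q)) = 0 := by
      push_cast at h ⊢; linear_combination -h
    have := Nat.le_of_dvd (by omega) ((ZMod.natCast_eq_zero_iff _ _).mp h0)
    nlinarith
  · intro h
    rw [hmcast] at h
    have h0 : ((2 : ℕ) : ZMod (2 * p * q)) = 0 := by
      push_cast at h hl2 ⊢; linear_combination -h - hl2
    have := Nat.le_of_dvd (by omega) ((ZMod.natCast_eq_zero_iff _ _).mp h0)
    nlinarith
  · push_cast at hN0 ⊢; linear_combination -hN0
  · rw [hmcast]; push_cast at hkey ⊢; linear_combination hkey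
  · push_cast at hkey ⊢; linear_combination hkey
  · rw [hmcast]; push_cast at hN0 ⊢; linear_combination -hN0

end NETCayley
end
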